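/- arXiv:2112.02677 — 2 statements merged into one kernel-verified Lean document; each statement's English description precedes it below -/
import Mathlib

section
/- Let C > 0, p, q ∈ ℕ and M := sup_r |y_r| r^{q+2} < ∞ for y : ℕ → ℂ, and suppose |a^{(l)}_{ij}| ≤ C^l j^q i^{-p} for all l, i, j (with a^{(0)}_{ij} = δ_{ij} so that the l = 0 term is y t^{-1}). Define Y(t)_i := Σ_{l=0}^∞ Σ_{j=1}^∞ a^{(l)}_{ij} y_j t^{-l-1} for t > C. Then for t > 2C: sup_i |Y(t)_i| i^p ≤ (1/(2C)) sup_i |y_i| i^p + (π²/(12C)) · M. -/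
/-!
Fix `i`. Against the decay `M / j^(q+2)` of `y`, the growth `j^q` of the coefficients leaves
`1 / j^2`, so the `l`-th inner series is at most `(π²/6) C^l M / i^p` (Basel). The outer series
is then dominated by a geometric series of ratio `C/t < 1/2`, which sums to at most
`(π²/6) M / i^p · C / (t (t - C)) ≤ (π²/6) M / i^p / (2C)`, while the `l = 0` term
contributes `|y_i| / t ≤ |y_i| / (2C)`.
-/

open Real

theorem hasSum_one_div_nat_add_one_sq :
    HasSum (fun j : ℕ => 1 / ((j : ℝ) + 1) ^ 2) (π ^ 2 / 6) := by
  have h := (hasSum_nat_add_iff' 1).mpr hasSum_zeta_two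
  simpa using h

theorem norm_tsum_mul_le_of_polynomial_bounds {R : Type*} [SeminormedRing R]
    (u v : ℕ → R) (A M : ℝ) (q : ℕ)
    (hu : ∀ j : ℕ, ‖u j‖ ≤ A * ((j : ℝ) + 1) ^ q)
    (hv : ∀ j : ℕ, ‖v j‖ * ((j : ℝ) + 1) ^ (q + 2) ≤ M) :
    ‖∑' j, u j * v j‖ ≤ A * M * (π ^ 2 / 6) := by
  refine tsum_of_norm_bounded (hasSum_one_div_nat_add_one_sq.mul_left (A * M)) fun j => ?_
  have hj : (0 : ℝ) < (j : ℝ) + 1 := by positivity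
  have hv' : ‖v j‖ ≤ M / ((j : ℝ) + 1) ^ (q + 2) := by
    rw [le_div_iff₀ (by positivity)]
    exact hv j
  calc ‖u j * v j‖ ≤ ‖u j‖ * ‖v j‖ := norm_mul_le _ _
    _ ≤ A * ((j : ℝ) + 1) ^ q * (M / ((j : ℝ) + 1) ^ (q + 2)) :=
      mul_le_mul (hu j) hv' (norm_nonneg _) ((norm_nonneg _).trans (hu j))
    _ = A * M * (1 / ((j : ℝ) + 1) ^ 2) := by
      rw [pow_add]
      field_simp

theorem norm_tsum_mul_inv_pow_le {𝕜 : Type*} [NormedDivisionRing 𝕜]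
    (b : ℕ → 𝕜) (B C : ℝ) (z : 𝕜) (hC : 0 ≤ C) (hz : C < ‖z‖)
    (hb : ∀ l : ℕ, ‖b l‖ ≤ B * C ^ (l + 1)) :
    ‖∑' l, b l * (z ^ (l + 2))⁻¹‖ ≤ B * C / (‖z‖ * (‖z‖ - C)) := by
  have hz0 : 0 < ‖z‖ := hC.trans_lt hz
  have hr : C / ‖z‖ < 1 := (div_lt_one hz0).mpr hz
  have hgeom := (hasSum_geometric_of_lt_one (by positivity) hr).mul_left (B * C / ‖z‖ ^ 2)
  have hsum : B * C / ‖z‖ ^ 2 * (1 - C / ‖z‖)⁻¹ = B * C / (‖z‖ * (‖z‖ - C)) := by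
    have : ‖z‖ - C ≠ 0 := (sub_pos.mpr hz).ne'
    field_simp
  refine hsum ▸ tsum_of_norm_bounded hgeom fun l => ?_
  calc ‖b l * (z ^ (l + 2))⁻¹‖ = ‖b l‖ / ‖z‖ ^ (l + 2) := by
        rw [norm_mul, norm_inv, norm_pow, div_eq_mul_inv]
    _ ≤ B * C ^ (l + 1) / ‖z‖ ^ (l + 2) := by gcongr; exact hb l
    _ = B * C / ‖z‖ ^ 2 * (C / ‖z‖) ^ l := by
      rw [div_pow, pow_succ, pow_add]
      field_simp

/-- Uniform boundedness of the resolvent-type series `Y(t)` in the weighted norms of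
`s(ℕ)` for `t > 2C`. -/
theorem resolvent_series_bound (C : ℝ) (hC : 0 < C) (p q : ℕ) (y : ℕ → ℂ) (M P : ℝ)
    (hM : ∀ r : ℕ, 1 ≤ r → ‖y r‖ * (r : ℝ) ^ (q + 2) ≤ M)
    (hP : ∀ i : ℕ, 1 ≤ i → ‖y i‖ * (i : ℝ) ^ p ≤ P)
    (a : ℕ → ℕ → ℕ → ℂ)
    (ha : ∀ l i j : ℕ, 1 ≤ l → 1 ≤ i → 1 ≤ j →
      ‖a l i j‖ ≤ C ^ l * (j : ℝ) ^ q / (i : ℝ) ^ p)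
    (t : ℝ) (ht : 2 * C < t) :
    ∀ i : ℕ, 1 ≤ i →
      ‖y i * (t : ℂ)⁻¹ +
          ∑' l : ℕ, (∑' j : ℕ, a (l + 1) i (j + 1) * y (j + 1)) * ((t : ℂ) ^ (l + 2))⁻¹‖
        * (i : ℝ) ^ p
      ≤ (1 / (2 * C)) * P + (π ^ 2 / (12 * C)) * M := by
  intro i hi
  have ht0 : 0 < t := by linarith
  have hnt : ‖(t : ℂ)‖ = t := by rw [Complex.norm_real, norm_of_nonneg ht0.le]
  have hM0 : 0 ≤ M := (by positivity : (0 : ℝ) ≤ _).trans (hM 1 le_rfl)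
  have hP0 : 0 ≤ P := (by positivity : (0 : ℝ) ≤ _).trans (hP i hi)
  have hinner : ∀ l : ℕ, ‖∑' j : ℕ, a (l + 1) i (j + 1) * y (j + 1)‖
      ≤ M * (π ^ 2 / 6) / (i : ℝ) ^ p * C ^ (l + 1) := fun l => by
    refine (norm_tsum_mul_le_of_polynomial_bounds _ _ (C ^ (l + 1) / (i : ℝ) ^ p) M q
      (fun j => ?_) (fun j => ?_)).trans_eq (by ring)
    · simpa [mul_div_right_comm] using ha (l + 1) i (j + 1) (by omega) hi (by omega)
    · simpa using hM (j + 1) (by omega)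
  have houter := norm_tsum_mul_inv_pow_le _ _ C (t : ℂ) hC.le (by rw [hnt]; linarith) hinner
  rw [hnt] at houter
  have hfirst : ‖y i * (t : ℂ)⁻¹‖ * (i : ℝ) ^ p ≤ P / t := by
    rw [norm_mul, norm_inv, hnt, mul_right_comm, ← div_eq_mul_inv]
    exact div_le_div_of_nonneg_right (hP i hi) ht0.le
  have hgeom : C / (t * (t - C)) ≤ 1 / (2 * C) := by
    rw [div_le_div_iff₀ (by nlinarith) (by positivity)]
    nlinarith
  calc _ ≤ (‖y i * (t : ℂ)⁻¹‖ + M * (π ^ 2 / 6) / (i : ℝ) ^ p * C / (t * (t - C)))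
        * (i : ℝ) ^ p := by gcongr; exact (norm_add_le _ _).trans (by gcongr)
    _ = ‖y i * (t : ℂ)⁻¹‖ * (i : ℝ) ^ p + M * (π ^ 2 / 6) * (C / (t * (t - C))) := by
        field_simp
    _ ≤ P / (2 * C) + M * (π ^ 2 / 6) * (1 / (2 * C)) := by
        gcongr
        exact hfirst.trans (div_le_div_of_nonneg_left hP0 (by positivity) ht.le)
    _ = (1 / (2 * C)) * P + (π ^ 2 / (12 * C)) * M := by ring
end

section
/- Let h : {Re z > 0} → ℂ be holomorphic, continuous up to the boundary on {Re z ≥ 1/k} for some k ∈ ℕ. Suppose (i) |h(z)| ≤ B e^{(1/k)|z|} for all z with Re(z) ≥ 1/k (slowly increasing bound), and (ii) for every n ∈ ℕ there is a constant C_n with |h(t)| e^{nt} ≤ C_n for all real t ≥ 1/k (rapid decay on the positive real axis). Then for every k there is a constant C with |h(z)| ≤ C e^{(1/k)|z| - k Re(z)} for all z with Re(z) ≥ 1/k. (Phragmén–Lindelöf transfer of decay from the real axis to a right half-plane, done in two quarter-plane sectors of opening π/2.) -/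
/-!
Multiply `h` by `exp ((a + iδ) z)` with `a = k`, `δ = 1/k`: the product is bounded on the real
half-line `[1/k, ∞)` by the decay of `h`, and on the vertical ray `1/k + i[0, ∞)` because
`|exp (iδ z)| = exp (-δ Im z)` absorbs the growth `exp (δ |z|)` of `h`; in between it grows at most
exponentially, i.e. with order `1 < 2`, so Phragmén–Lindelöf for a quadrant bounds it on the whole
quarter-plane `Re z ≥ 1/k, Im z ≥ 0`. The lower quarter-plane is the same statement for
`conj ∘ h ∘ conj`.
-/

open Complex ComplexConjugate Set Filter

theorem norm_le_on_shifted_quadrant_I {g : ℂ → ℂ} {c A M C : ℝ} (hc : 0 < c) (hM : 0 ≤ M)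
    (hd : DifferentiableOn ℂ g {z | 0 < z.re})
    (hgrowth : ∀ z : ℂ, c ≤ z.re → ‖g z‖ ≤ A * Real.exp (M * ‖z‖))
    (hre : ∀ t : ℝ, c ≤ t → ‖g t‖ ≤ C) (him : ∀ y : ℝ, 0 ≤ y → ‖g (c + y * I)‖ ≤ C)
    {z : ℂ} (hz_re : c ≤ z.re) (hz_im : 0 ≤ z.im) : ‖g z‖ ≤ C := by
  set f : ℂ → ℂ := fun w ↦ g (w + c)
  have hf : DiffContOnCl ℂ f (Ioi 0 ×ℂ Ioi 0) := by
    refine DifferentiableOn.diffContOnCl (hd.comp (differentiableOn_id.add_const _) ?_)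
    intro w hw
    rw [closure_reProdIm, closure_Ioi, mem_reProdIm] at hw
    show 0 < (w + c).re
    rw [add_re, ofReal_re]
    linarith [mem_Ici.1 hw.1]
  have hO : f =O[Bornology.cobounded ℂ ⊓ 𝓟 (Ioi 0 ×ℂ Ioi 0)]
      fun w ↦ Real.exp (M * ‖w‖ ^ (1 : ℝ)) := by
    refine Asymptotics.IsBigO.of_bound (A * Real.exp (M * c)) (eventually_inf_principal.2 ?_)
    refine Eventually.of_forall fun w hw ↦ ?_
    rw [mem_reProdIm] at hw
    have hnorm : ‖w + c‖ ≤ ‖w‖ + c := by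
      simpa [abs_of_pos hc] using norm_add_le w (c : ℂ)
    have hA : 0 ≤ A := nonneg_of_mul_nonneg_left ((norm_nonneg _).trans (hgrowth c (by simp)))
      (Real.exp_pos _)
    calc ‖f w‖ ≤ A * Real.exp (M * ‖w + c‖) := hgrowth _ (by simp [le_of_lt (mem_Ioi.1 hw.1)])
      _ ≤ A * Real.exp (M * (‖w‖ + c)) := by gcongr
      _ = A * Real.exp (M * c) * ‖Real.exp (M * ‖w‖ ^ (1 : ℝ))‖ := by
        rw [Real.rpow_one, Real.norm_of_nonneg (Real.exp_pos _).le, mul_assoc, ← Real.exp_add]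
        ring_nf
  have key := PhragmenLindelof.quadrant_I hf ⟨1, one_lt_two, M, hO⟩
    (fun t ht ↦ by simpa using hre (t + c) (by linarith))
    (fun y hy ↦ by simpa [f, add_comm] using him y hy)
    (z := z - c) (by simpa using hz_re) (by simpa using hz_im)
  simpa [f] using key

theorem exists_bound_upper_quadrant_of_decay_on_real {h : ℂ → ℂ} {c δ a B C : ℝ} (hc : 0 < c)
    (hδ : 0 ≤ δ) (hd : DifferentiableOn ℂ h {z | 0 < z.re})
    (hgrowth : ∀ z : ℂ, c ≤ z.re → ‖h z‖ ≤ B * Real.exp (δ * ‖z‖))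
    (hdecay : ∀ t : ℝ, c ≤ t → ‖h t‖ * Real.exp (a * t) ≤ C) :
    ∃ D, ∀ z : ℂ, c ≤ z.re → 0 ≤ z.im → ‖h z‖ ≤ D * Real.exp (δ * ‖z‖ - a * z.re) := by
  set μ : ℂ := a + δ * I
  set g : ℂ → ℂ := fun z ↦ h z * cexp (μ * z)
  have hg_norm (z : ℂ) : ‖g z‖ = ‖h z‖ * Real.exp (a * z.re - δ * z.im) := by
    simp [g, μ, norm_exp]
  have hB : 0 ≤ B := nonneg_of_mul_nonneg_left ((norm_nonneg _).trans (hgrowth c (by simp)))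
    (Real.exp_pos _)
  set D := max C (B * Real.exp ((δ + a) * c))
  have hvert (y : ℝ) (hy : 0 ≤ y) : ‖g (c + y * I)‖ ≤ D := by
    have hre : (c + y * I : ℂ).re = c := by simp
    have him : (c + y * I : ℂ).im = y := by simp
    have hnorm : ‖(c + y * I : ℂ)‖ ≤ c + y := by
      simpa [abs_of_pos hc, abs_of_nonneg hy] using norm_add_le (c : ℂ) (y * I)
    calc ‖g (c + y * I)‖ ≤ B * Real.exp (δ * (c + y)) * Real.exp (a * c - δ * y) := by
          rw [hg_norm, hre, him]
          gcongr
          exact (hgrowth _ hre.ge).trans (by gcongr)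
      _ = B * Real.exp ((δ + a) * c) := by rw [mul_assoc, ← Real.exp_add]; ring_nf
      _ ≤ D := le_max_right _ _
  have hg_diff : DifferentiableOn ℂ g {z | 0 < z.re} :=
    hd.mul (Differentiable.differentiableOn (by fun_prop))
  have hquad (z : ℂ) (hz_re : c ≤ z.re) (hz_im : 0 ≤ z.im) : ‖g z‖ ≤ D := by
    refine norm_le_on_shifted_quadrant_I (A := B) (M := δ + ‖μ‖) hc (by positivity)
      hg_diff (fun w hw ↦ ?_) (fun t ht ↦ ?_) hvert hz_re hz_im
    · calc ‖g w‖ ≤ B * Real.exp (δ * ‖w‖) * Real.exp (‖μ‖ * ‖w‖) := by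
            rw [← norm_mul μ w]
            exact (norm_mul _ _).trans_le <|
              mul_le_mul (hgrowth w hw) (norm_exp_le_exp_norm _) (norm_nonneg _) (by positivity)
        _ = B * Real.exp ((δ + ‖μ‖) * ‖w‖) := by rw [mul_assoc, ← Real.exp_add]; ring_nf
    · rw [hg_norm, ofReal_re, ofReal_im, mul_zero, sub_zero]
      exact (hdecay t ht).trans (le_max_left _ _)
  refine ⟨D, fun z hz_re hz_im ↦ ?_⟩
  have hD : 0 ≤ D := (norm_nonneg _).trans (hquad z hz_re hz_im)
  calc ‖h z‖ = ‖g z‖ * Real.exp (δ * z.im - a * z.re) := by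
        rw [hg_norm, mul_assoc, ← Real.exp_add, sub_add_sub_cancel', sub_self, Real.exp_zero,
          mul_one]
    _ ≤ D * Real.exp (δ * ‖z‖ - a * z.re) := by
        gcongr
        · exact hquad z hz_re hz_im
        · exact im_le_norm z

theorem exists_bound_right_half_plane_of_decay_on_real {h : ℂ → ℂ} {c δ a B C : ℝ} (hc : 0 < c)
    (hδ : 0 ≤ δ) (hd : DifferentiableOn ℂ h {z | 0 < z.re})
    (hgrowth : ∀ z : ℂ, c ≤ z.re → ‖h z‖ ≤ B * Real.exp (δ * ‖z‖))
    (hdecay : ∀ t : ℝ, c ≤ t → ‖h t‖ * Real.exp (a * t) ≤ C) :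
    ∃ D, ∀ z : ℂ, c ≤ z.re → ‖h z‖ ≤ D * Real.exp (δ * ‖z‖ - a * z.re) := by
  obtain ⟨D₁, hD₁⟩ := exists_bound_upper_quadrant_of_decay_on_real hc hδ hd hgrowth hdecay
  have hd' : DifferentiableOn ℂ (conj ∘ h ∘ conj) {z | 0 < z.re} := fun z hz ↦
    DifferentiableAt.differentiableWithinAt <| differentiableAt_conj_conj_iff.2 <|
      hd.differentiableAt <| (isOpen_lt continuous_const continuous_re).mem_nhds (by simpa using hz)
  obtain ⟨D₂, hD₂⟩ := exists_bound_upper_quadrant_of_decay_on_real hc hδ hd'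
    (fun z hz ↦ by simpa using hgrowth (conj z) (by simpa using hz))
    (fun t ht ↦ by simpa using hdecay t ht)
  refine ⟨max D₁ D₂, fun z hz ↦ ?_⟩
  rcases le_total 0 z.im with hz_im | hz_im
  · exact (hD₁ z hz hz_im).trans (by gcongr; exact le_max_left _ _)
  · have hz' := hD₂ (conj z) (by simpa using hz) (by simpa using hz_im)
    simp only [Function.comp_apply, conj_conj, RCLike.norm_conj, conj_re] at hz'
    exact hz'.trans (by gcongr; exact le_max_right _ _)

theorem exists_bound_Ici_of_continuousOn {f : ℝ → ℝ} {a b C : ℝ} (hf : ContinuousOn f (Ici a))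
    (hb : ∀ t, b ≤ t → f t ≤ C) : ∃ C', ∀ t, a ≤ t → f t ≤ C' := by
  obtain ⟨M, hM⟩ := isCompact_Icc.bddAbove_image (hf.mono (Icc_subset_Ici_self : Icc a b ⊆ _))
  refine ⟨max C M, fun t ht ↦ ?_⟩
  rcases le_total b t with hbt | htb
  · exact (hb t hbt).trans (le_max_left _ _)
  · exact (hM (mem_image_of_mem f ⟨ht, htb⟩)).trans (le_max_right _ _)

theorem phragmen_lindelof_transfer_general (k₀ : ℕ) (h : ℂ → ℂ)
    (hol : DifferentiableOn ℂ h {z : ℂ | 0 < z.re})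
    (hgrow : ∀ k : ℕ, 1 ≤ k → ∃ B : ℝ, ∀ z : ℂ, 1 / (k : ℝ) ≤ z.re →
      ‖h z‖ ≤ B * Real.exp (‖z‖ / k))
    (hdecay : ∀ n : ℕ, ∃ Cn : ℝ, ∀ t : ℝ, 1 / (k₀ : ℝ) ≤ t →
      ‖h (t : ℂ)‖ * Real.exp ((n : ℝ) * t) ≤ Cn) :
    ∀ k : ℕ, 1 ≤ k → ∃ C : ℝ, ∀ z : ℂ, 1 / (k : ℝ) ≤ z.re →
      ‖h z‖ ≤ C * Real.exp (‖z‖ / k - (k : ℝ) * z.re) := by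
  intro k hk
  have hc : (0 : ℝ) < 1 / k := by positivity
  obtain ⟨B, hB⟩ := hgrow k hk
  obtain ⟨Cn, hCn⟩ := hdecay k
  have hcont : ContinuousOn (fun t : ℝ ↦ ‖h t‖ * Real.exp (k * t)) (Ici (1 / k)) := by
    refine ContinuousOn.mul ?_ (by fun_prop)
    refine (hol.continuousOn.comp continuous_ofReal.continuousOn fun t ht ↦ ?_).norm
    exact hc.trans_le ht
  obtain ⟨C, hC⟩ := exists_bound_Ici_of_continuousOn hcont hCn
  simpa only [one_div_mul_eq_div] using
    exists_bound_right_half_plane_of_decay_on_real hc hc.le hol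
      (fun z hz ↦ by simpa only [one_div_mul_eq_div] using hB z hz) hC

/-- Phragmén–Lindelöf transfer: a holomorphic function of slow growth on the right
half-plane which decays faster than every exponential on the positive real axis
satisfies `|h(z)| ≤ C e^{(1/k)|z| - k Re z}` on each half-plane `Re z ≥ 1/k`. -/
theorem phragmen_lindelof_transfer (k₀ : ℕ) (hk₀ : 1 ≤ k₀) (h : ℂ → ℂ)
    (hol : DifferentiableOn ℂ h {z : ℂ | 0 < z.re})
    (hgrow : ∀ k : ℕ, 1 ≤ k → ∃ B : ℝ, ∀ z : ℂ, 1 / (k : ℝ) ≤ z.re →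
      ‖h z‖ ≤ B * Real.exp (‖z‖ / k))
    (hdecay : ∀ n : ℕ, ∃ Cn : ℝ, ∀ t : ℝ, 1 / (k₀ : ℝ) ≤ t →
      ‖h (t : ℂ)‖ * Real.exp ((n : ℝ) * t) ≤ Cn) :
    ∀ k : ℕ, 1 ≤ k → ∃ C : ℝ, ∀ z : ℂ, 1 / (k : ℝ) ≤ z.re →
      ‖h z‖ ≤ C * Real.exp (‖z‖ / k - (k : ℝ) * z.re) :=
  phragmen_lindelof_transfer_general k₀ h hol hgrow hdecay
end
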